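/- arXiv:0911.0379 — 6 statements merged into one kernel-verified Lean document; each statement's English description precedes it below -/
import Mathlib

section
/- Let V be a finite-dimensional vector space over a field F with a non-degenerate bilinear form B that is either symmetric or alternating, and let T be an isometry of B. If v and w are generalized eigenvectors of T with eigenvalues λ and μ respectively and λμ ≠ 1, then B(v, w) = 0. -/
private theorem aux0 {F V : Type*} [Field F] [AddCommGroup V] [Module F V]
    (B : LinearMap.BilinForm F V)
    (T : V →ₗ[F] V) (hT : ∀ v w, B (T v) (T w) = B v w)
    (lam mu : F) (hlm : lam * mu ≠ 1) :
    ∀ k n m : ℕ, n + m ≤ k → ∀ v w : V,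
      ((T - lam • (1 : Module.End F V)) ^ n) v = 0 →
      ((T - mu • (1 : Module.End F V)) ^ m) w = 0 → B v w = 0 := by
  intro k
  induction k with
  | zero =>
    intro n m hnm v w hv hw
    obtain ⟨rfl, rfl⟩ : n = 0 ∧ m = 0 := by omega
    simp only [pow_zero, Module.End.one_apply] at hv
    simp [hv]
  | succ k ih =>
    intro n m hnm v w hv hw
    match n, m with
    | 0, _ =>
      simp only [pow_zero, Module.End.one_apply] at hv
      simp [hv]
    | _ + 1, 0 =>
      simp only [pow_zero, Module.End.one_apply] at hw
      simp [hw]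
    | n + 1, m + 1 =>
      set v' := (T - lam • (1 : Module.End F V)) v with hv'def
      set w' := (T - mu • (1 : Module.End F V)) w with hw'def
      have hv' : ((T - lam • (1 : Module.End F V)) ^ n) v' = 0 := by
        rw [hv'def, ← Module.End.mul_apply, ← pow_succ]; exact hv
      have hw' : ((T - mu • (1 : Module.End F V)) ^ m) w' = 0 := by
        rw [hw'def, ← Module.End.mul_apply, ← pow_succ]; exact hw
      have h1 : B v w' = 0 := ih (n + 1) m (by omega) v w' hv hw'
      have h2 : B v' w = 0 := ih n (m + 1) (by omega) v' w hv' hw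
      have h3 : B v' w' = 0 := ih n m (by omega) v' w' hv' hw'
      have hv'' : v' = T v - lam • v := by
        rw [hv'def]; simp [LinearMap.sub_apply]
      have hw'' : w' = T w - mu • w := by
        rw [hw'def]; simp [LinearMap.sub_apply]
      have key : (1 - lam * mu) * B v w = lam * B v w' + mu * B v' w + B v' w' := by
        rw [hv'', hw'']
        simp only [map_sub, map_smul, LinearMap.sub_apply, LinearMap.smul_apply,
          smul_eq_mul]
        rw [hT v w]
        ring
      rw [h1, h2, h3] at key
      have hne : (1 : F) - lam * mu ≠ 0 := sub_ne_zero.mpr (Ne.symm hlm)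
      simp only [mul_zero, add_zero] at key
      rcases mul_eq_zero.mp key with h | h
      · exact absurd h hne
      · exact h

/-- Let `V` be a finite-dimensional vector space over a field `F` with a non-degenerate
bilinear form `B` that is either symmetric or alternating, and let `T` be an isometry of `B`.
If `v` and `w` are generalized eigenvectors of `T` with eigenvalues `λ` and `μ` respectively
and `λμ ≠ 1`, then `B v w = 0`. -/
theorem stmt0 {F V : Type*} [Field F] [AddCommGroup V] [Module F V]
    [FiniteDimensional F V]
    (B : LinearMap.BilinForm F V) (hB : B.Nondegenerate) (hBsa : B.IsSymm ∨ B.IsAlt)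
    (T : V →ₗ[F] V) (hT : ∀ v w, B (T v) (T w) = B v w)
    (lam mu : F) (v w : V)
    (hv : v ∈ Module.End.maxGenEigenspace T lam)
    (hw : w ∈ Module.End.maxGenEigenspace T mu)
    (hlm : lam * mu ≠ 1) :
    B v w = 0 := by
  rw [Module.End.mem_maxGenEigenspace] at hv hw
  obtain ⟨n, hn⟩ := hv
  obtain ⟨m, hm⟩ := hw
  exact aux0 B T hT lam mu hlm (n + m) n m le_rfl v w hn hm
end

section
/- Let T be an isometry of a non-degenerate symmetric or alternating bilinear form B on a finite-dimensional vector space V over an algebraically closed field. For any eigenvalue λ of T with λ ≠ ±1, the restriction of B to the generalized eigenspace V_λ is identically zero. -/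
/-- For an isometry `T` of a non-degenerate symmetric or alternating bilinear form on a
finite-dimensional space over an algebraically closed field, if `λ ≠ ±1` is an eigenvalue,
then `B` vanishes identically on the generalized eigenspace `V_λ`. -/
theorem stmt1 {F V : Type*} [Field F] [IsAlgClosed F] [CharZero F]
    [AddCommGroup V] [Module F V] [FiniteDimensional F V]
    (B : LinearMap.BilinForm F V) (hB : B.Nondegenerate) (hBsa : B.IsSymm ∨ B.IsAlt)
    (T : V →ₗ[F] V) (hT : ∀ v w, B (T v) (T w) = B v w)
    (lam : F) (hlam : Module.End.HasEigenvalue T lam)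
    (h1 : lam ≠ 1) (h2 : lam ≠ -1) :
    ∀ v ∈ Module.End.maxGenEigenspace T lam,
      ∀ w ∈ Module.End.maxGenEigenspace T lam, B v w = 0 := by
  let S : Module.End F V := T - lam • 1
  have hl2 : 1 - lam * lam ≠ 0 := by
    intro h
    have h' : (1 - lam) * (1 + lam) = 0 := by ring_nf; linear_combination h
    rcases mul_eq_zero.mp h' with h | h
    · exact h1 (by linear_combination -h)
    · exact h2 (by linear_combination h)
  have key : ∀ N m n, m + n ≤ N → ∀ v w, (S ^ m) v = 0 → (S ^ n) w = 0 → B v w = 0 := by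
    intro N
    induction N with
    | zero =>
      intro m n hmn v w hv hw
      obtain ⟨hm, hn⟩ : m = 0 ∧ n = 0 := by omega
      subst hm; subst hn
      simp only [pow_zero, Module.End.one_apply] at hv hw
      simp [hv, hw]
    | succ N ih =>
      intro m n hmn v w hv hw
      rcases Nat.eq_zero_or_pos m with hm | hm
      · subst hm; simp only [pow_zero, Module.End.one_apply] at hv; simp [hv]
      rcases Nat.eq_zero_or_pos n with hn | hn
      · subst hn; simp only [pow_zero, Module.End.one_apply] at hw; simp [hw]
      obtain ⟨m', rfl⟩ := Nat.exists_eq_add_of_lt hm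
      obtain ⟨n', rfl⟩ := Nat.exists_eq_add_of_lt hn
      simp only [zero_add] at hv hw hmn
      have hv' : (S ^ m') (S v) = 0 := by
        rw [← Module.End.mul_apply, ← pow_succ]; exact hv
      have hw' : (S ^ n') (S w) = 0 := by
        rw [← Module.End.mul_apply, ← pow_succ]; exact hw
      have hTv : T v = S v + lam • v := by
        show T v = (T - lam • 1) v + lam • v; simp
      have hTw : T w = S w + lam • w := by
        show T w = (T - lam • 1) w + lam • w; simp
      have h0 : B v w = B (T v) (T w) := (hT v w).symm
      rw [hTv, hTw] at h0
      simp only [map_add, map_smul, LinearMap.add_apply, LinearMap.smul_apply,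
        smul_eq_mul] at h0
      have e1 : B (S v) (S w) = 0 := ih m' n' (by omega) _ _ hv' hw'
      have e2 : B (S v) w = 0 := ih m' (n' + 1) (by omega) _ _ hv' hw
      have e3 : B v (S w) = 0 := ih (m' + 1) n' (by omega) _ _ hv hw'
      rw [e1, e2, e3] at h0
      have hz : (1 - lam * lam) * B v w = 0 := by linear_combination h0
      exact (mul_eq_zero.mp hz).resolve_left hl2
  intro v hv w hw
  rw [Module.End.mem_maxGenEigenspace] at hv hw
  obtain ⟨m, hv⟩ := hv
  obtain ⟨n, hw⟩ := hw
  exact key (m + n) m n le_rfl v w hv hw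
end

section
/- Let T be an isometry of a non-degenerate symmetric or alternating bilinear form B on a finite-dimensional vector space V over an algebraically closed field F of characteristic 0. Then for λ ≠ 0, the pairing V_λ × V_{λ^{-1}} → F induced by B is non-degenerate; in particular dim V_λ = dim V_{λ^{-1}}. -/
/-!
Writing `T v = (T - μ) v + μ v` and `T w = (T - ν) w + ν w`, the isometry identity
`B (T v) (T w) = B v w` and induction on the nilpotency orders give `B(V_μ, V_ν) = 0`
whenever `μ ν ≠ 1`. Over an algebraically closed field `V` is the sum of the `V_ν`, so a vector
of `V_λ` orthogonal to `V_{λ⁻¹}` is orthogonal to all of `V`, hence zero. Each side of the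
pairing thus embeds into the dual of the other, and the dimensions agree.
-/

open Module

namespace LinearMap

variable {K M N : Type*} [Field K] [AddCommGroup M] [Module K M] [AddCommGroup N] [Module K N]
  [FiniteDimensional K N]

theorem SeparatingLeft.finrank_le {B : M →ₗ[K] N →ₗ[K] K} (hB : B.SeparatingLeft) :
    finrank K M ≤ finrank K N :=
  calc finrank K M ≤ finrank K (Dual K N) :=
        finrank_le_finrank_of_injective (ker_eq_bot.mp (separatingLeft_iff_ker_eq_bot.mp hB))
    _ = finrank K N := Subspace.dual_finrank_eq

theorem finrank_le_of_forall_apply_eq_zero (B : M →ₗ[K] N →ₗ[K] K)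
    {p : Submodule K M} {q : Submodule K N}
    (h : ∀ v ∈ p, (∀ w ∈ q, B v w = 0) → v = 0) : finrank K p ≤ finrank K q :=
  SeparatingLeft.finrank_le (B := B.domRestrict₁₂ p q) fun v hv ↦
    Subtype.ext (h v v.2 fun w hw ↦ hv ⟨w, hw⟩)

end LinearMap

namespace LinearMap.BilinForm

open Module.End

variable {F V : Type*} [Field F] [AddCommGroup V] [Module F V]
  {B : LinearMap.BilinForm F V} {T : Module.End F V}

theorem apply_eq_zero_of_isometry_of_sub_smul (hT : ∀ v w, B (T v) (T w) = B v w)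
    {μ ν : F} (hμν : μ * ν ≠ 1) {v w : V}
    (h₁ : B ((T - μ • 1) v) w = 0) (h₂ : B v ((T - ν • 1) w) = 0)
    (h₁₂ : B ((T - μ • 1) v) ((T - ν • 1) w) = 0) : B v w = 0 := by
  have hTv : T v = (T - μ • 1) v + μ • v := by simp
  have hTw : T w = (T - ν • 1) w + ν • w := by simp
  have key := hT v w
  rw [hTv, hTw] at key
  simp only [map_add, map_smul, LinearMap.add_apply, LinearMap.smul_apply, smul_eq_mul,
    h₁, h₂, h₁₂] at key
  have : (μ * ν - 1) * B v w = 0 := by linear_combination key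
  exact (mul_eq_zero.mp this).resolve_left (sub_ne_zero.mpr hμν)

theorem apply_eq_zero_of_mem_maxGenEigenspace (hT : ∀ v w, B (T v) (T w) = B v w)
    {μ ν : F} (hμν : μ * ν ≠ 1) {v w : V}
    (hv : v ∈ maxGenEigenspace T μ) (hw : w ∈ maxGenEigenspace T ν) : B v w = 0 := by
  obtain ⟨m, hm⟩ := (mem_maxGenEigenspace T μ v).mp hv
  obtain ⟨n, hn⟩ := (mem_maxGenEigenspace T ν w).mp hw
  clear hv hw
  induction m generalizing v w n with
  | zero => simp_all
  | succ m ihm =>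
    rw [pow_succ, mul_apply] at hm
    induction n generalizing w with
    | zero => simp_all
    | succ n ihn =>
      rw [pow_succ, mul_apply] at hn
      exact apply_eq_zero_of_isometry_of_sub_smul hT hμν (ihm hm (n + 1) (by rwa [pow_succ]))
        (ihn hn) (ihm hm n hn)

theorem eq_zero_of_mem_maxGenEigenspace_of_forall_inv [IsAlgClosed F] [FiniteDimensional F V]
    (hB : B.SeparatingLeft) (hT : ∀ v w, B (T v) (T w) = B v w) {μ : F} {v : V}
    (hv : v ∈ maxGenEigenspace T μ) (h : ∀ w ∈ maxGenEigenspace T μ⁻¹, B v w = 0) : v = 0 := by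
  refine hB v fun w ↦ ?_
  have hker : ⨆ ν, maxGenEigenspace T ν ≤ ker (B v) := iSup_le fun ν x hx ↦ by
    by_cases hν : ν = μ⁻¹
    · exact h x (hν ▸ hx)
    · exact apply_eq_zero_of_mem_maxGenEigenspace hT
        (fun hμν ↦ hν (eq_inv_of_mul_eq_one_right hμν)) hv hx
  rw [iSup_maxGenEigenspace_eq_top] at hker
  exact hker Submodule.mem_top

end LinearMap.BilinForm

theorem stmt2_general {F V : Type*} [Field F] [IsAlgClosed F]
    [AddCommGroup V] [Module F V] [FiniteDimensional F V]
    (B : LinearMap.BilinForm F V) (hB : B.Nondegenerate)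
    (T : V →ₗ[F] V) (hT : ∀ v w, B (T v) (T w) = B v w)
    (lam : F) :
    (∀ v ∈ Module.End.maxGenEigenspace T lam,
        (∀ w ∈ Module.End.maxGenEigenspace T lam⁻¹, B v w = 0) → v = 0) ∧
    (∀ w ∈ Module.End.maxGenEigenspace T lam⁻¹,
        (∀ v ∈ Module.End.maxGenEigenspace T lam, B v w = 0) → w = 0) ∧
    Module.finrank F (Module.End.maxGenEigenspace T lam) =
      Module.finrank F (Module.End.maxGenEigenspace T lam⁻¹) := by
  have left : ∀ v ∈ Module.End.maxGenEigenspace T lam,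
      (∀ w ∈ Module.End.maxGenEigenspace T lam⁻¹, B v w = 0) → v = 0 := fun _ hv ↦
    LinearMap.BilinForm.eq_zero_of_mem_maxGenEigenspace_of_forall_inv hB.1 hT hv
  have right : ∀ w ∈ Module.End.maxGenEigenspace T lam⁻¹,
      (∀ v ∈ Module.End.maxGenEigenspace T lam, B v w = 0) → w = 0 := fun _ hw h ↦
    LinearMap.BilinForm.eq_zero_of_mem_maxGenEigenspace_of_forall_inv (B := B.flip)
      (LinearMap.flip_separatingLeft.mpr hB.2) (fun v w ↦ hT w v) hw
      fun v hv ↦ h v (by rwa [inv_inv] at hv)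
  exact ⟨left, right, (LinearMap.finrank_le_of_forall_apply_eq_zero B left).antisymm
    (LinearMap.finrank_le_of_forall_apply_eq_zero B.flip right)⟩

/-- For an isometry `T` of a non-degenerate symmetric or alternating bilinear form over an
algebraically closed field of characteristic 0 and `λ ≠ 0`, the pairing
`V_λ × V_{λ⁻¹} → F` induced by `B` is non-degenerate, and in particular
`dim V_λ = dim V_{λ⁻¹}`. -/
theorem stmt2 {F V : Type*} [Field F] [IsAlgClosed F] [CharZero F]
    [AddCommGroup V] [Module F V] [FiniteDimensional F V]
    (B : LinearMap.BilinForm F V) (hB : B.Nondegenerate) (hBsa : B.IsSymm ∨ B.IsAlt)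
    (T : V →ₗ[F] V) (hT : ∀ v w, B (T v) (T w) = B v w)
    (lam : F) (hlam : lam ≠ 0) :
    (∀ v ∈ Module.End.maxGenEigenspace T lam,
        (∀ w ∈ Module.End.maxGenEigenspace T lam⁻¹, B v w = 0) → v = 0) ∧
    (∀ w ∈ Module.End.maxGenEigenspace T lam⁻¹,
        (∀ v ∈ Module.End.maxGenEigenspace T lam, B v w = 0) → w = 0) ∧
    Module.finrank F (Module.End.maxGenEigenspace T lam) =
      Module.finrank F (Module.End.maxGenEigenspace T lam⁻¹) :=
  stmt2_general B hB T hT lam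
end

section
/- Let T be an isometry of a non-degenerate symmetric or alternating bilinear form B on a finite-dimensional vector space V over an algebraically closed field of characteristic 0. Then V decomposes as the direct sum of the generalized eigenspaces V_1, V_{−1}, and the subspaces V_λ + V_{λ^{-1}} for pairs {λ, λ^{-1}} with λ ≠ ±1, and this direct sum is orthogonal with respect to B. -/
lemma aux_orth {F V : Type*} [Field F] [AddCommGroup V] [Module F V]
    (B : LinearMap.BilinForm F V)
    (T : V →ₗ[F] V) (hT : ∀ v w, B (T v) (T w) = B v w)
    (lam mu : F) (hlm : lam * mu ≠ 1) :
    ∀ n k l, k + l ≤ n → ∀ v w, ((T - lam • (1 : Module.End F V)) ^ k) v = 0 →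
      ((T - mu • (1 : Module.End F V)) ^ l) w = 0 → B v w = 0 := by
  intro n
  induction n with
  | zero =>
    intro k l hkl v w hv hw
    obtain ⟨rfl, rfl⟩ : k = 0 ∧ l = 0 := by omega
    simp only [pow_zero, Module.End.one_apply] at hv hw
    simp [hv]
  | succ n ih =>
    intro k l hkl v w hv hw
    match k, l with
    | 0, _ => simp only [pow_zero, Module.End.one_apply] at hv; simp [hv]
    | _, 0 => simp only [pow_zero, Module.End.one_apply] at hw; simp [hw]
    | k'+1, l'+1 =>
    set v' := (T - lam • (1 : Module.End F V)) v with hv'def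
    set w' := (T - mu • (1 : Module.End F V)) w with hw'def
    have hv' : ((T - lam • (1 : Module.End F V)) ^ k') v' = 0 := by
      rw [hv'def, ← Module.End.mul_apply, ← pow_succ]; exact hv
    have hw' : ((T - mu • (1 : Module.End F V)) ^ l') w' = 0 := by
      rw [hw'def, ← Module.End.mul_apply, ← pow_succ]; exact hw
    have h1 : B v' w' = 0 := ih k' l' (by omega) v' w' hv' hw'
    have h2 : B v' w = 0 := ih k' (l'+1) (by omega) v' w hv' hw
    have h3 : B v w' = 0 := ih (k'+1) l' (by omega) v w' hv hw'
    have hTv : T v = v' + lam • v := by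
      rw [hv'def]; simp [sub_add_cancel]
    have hTw : T w = w' + mu • w := by
      rw [hw'def]; simp [sub_add_cancel]
    have key : B v w = lam * mu * B v w := by
      conv_lhs => rw [← hT v w, hTv, hTw]
      simp only [map_add, map_smul, LinearMap.add_apply, LinearMap.smul_apply, smul_eq_mul,
        h1, h2, h3]
      ring
    have : (1 - lam * mu) * B v w = 0 := by linear_combination key
    rcases mul_eq_zero.mp this with h | h
    · exact absurd (by linear_combination -h) hlm
    · exact h

/-- For an isometry `T` of a non-degenerate symmetric or alternating bilinear form over an
algebraically closed field of characteristic 0, `V` is the internal direct sum of the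
generalized eigenspaces, and this decomposition groups into the orthogonal decomposition
`V = V_1 ⊕ V_{-1} ⊕ ⨁ (V_λ + V_{λ⁻¹})`: generalized eigenspaces `V_λ`, `V_μ` belonging to
distinct groups (i.e. with `μ ≠ λ⁻¹`, which in particular is the case for summands not of
the form `V_λ + V_{λ⁻¹}`) are `B`-orthogonal. -/
theorem stmt4 {F V : Type*} [Field F] [DecidableEq F] [IsAlgClosed F] [CharZero F]
    [AddCommGroup V] [Module F V] [FiniteDimensional F V]
    (B : LinearMap.BilinForm F V) (hB : B.Nondegenerate) (hBsa : B.IsSymm ∨ B.IsAlt)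
    (T : V →ₗ[F] V) (hT : ∀ v w, B (T v) (T w) = B v w) :
    DirectSum.IsInternal (fun lam : F => Module.End.maxGenEigenspace T lam) ∧
    (∀ lam mu : F, lam * mu ≠ 1 →
      ∀ v ∈ Module.End.maxGenEigenspace T lam,
        ∀ w ∈ Module.End.maxGenEigenspace T mu, B v w = 0) := by
  constructor
  · exact DirectSum.isInternal_submodule_of_iSupIndep_of_iSup_eq_top
      (Module.End.independent_maxGenEigenspace T)
      (Module.End.iSup_maxGenEigenspace_eq_top T)
  · intro lam mu hlm v hv w hw
    rw [Module.End.mem_maxGenEigenspace] at hv hw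
    obtain ⟨k, hk⟩ := hv
    obtain ⟨l, hl⟩ := hw
    exact aux_orth B T hT lam mu hlm (k + l) k l le_rfl v w hk hl
end

section
/- If T is an isometry of a non-degenerate symmetric or alternating bilinear form on a finite-dimensional space over an algebraically closed field of characteristic 0, then the characteristic polynomial of T factors as (x−1)^l (x+1)^m q(x), where q is self-dual: for every root λ of q, λ^{-1} is a root of q with the same multiplicity. -/
/-!
If `G` is the Gram matrix of `B` and `A` the matrix of `T`, the isometry condition reads
`Aᵀ G A = G`, so `A⁻¹ = G⁻¹ Aᵀ G` has the characteristic polynomial of `Aᵀ`, i.e. of `A`.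
As the characteristic polynomial of `A⁻¹` is a unit multiple of the reverse of `χ_A`,
`χ_T` is self-reciprocal up to a scalar: `0` is not a root, and a nonzero `λ` and `λ⁻¹` have
the same multiplicity. Splitting off the factors at `±1` leaves the other multiplicities alone.
-/

open Polynomial

namespace Polynomial

theorem reverse_pow {R : Type*} [Semiring R] [NoZeroDivisors R] (p : R[X]) (n : ℕ) :
    (p ^ n).reverse = p.reverse ^ n := by
  induction n with
  | zero => simpa using reverse_C (1 : R)
  | succ n ih => rw [pow_succ, reverse_mul_of_domain, ih, pow_succ]

theorem reverse_X_sub_C {R : Type*} [Ring R] [Nontrivial R] (a : R) :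
    (X - C a).reverse = 1 - C a * X := by
  have hX : (X : R[X]).reverse = 1 := by
    rw [← mul_one X, reverse_X_mul, ← C_1, reverse_C]
  rw [sub_eq_add_neg, ← C_neg, reverse_add_C, hX]
  simp [sub_eq_add_neg]

theorem rootMultiplicity_mul_of_not_isRoot {R : Type*} [CommRing R] [IsDomain R]
    {p q : R[X]} {a : R} (hp : ¬ p.IsRoot a) :
    (p * q).rootMultiplicity a = q.rootMultiplicity a := by
  rcases eq_or_ne q 0 with rfl | hq
  · simp
  have hp0 : p ≠ 0 := by rintro rfl; exact hp (by simp)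
  rw [rootMultiplicity_mul (mul_ne_zero hp0 hq), rootMultiplicity_eq_zero hp, zero_add]

theorem rootMultiplicity_reverse {K : Type*} [Field K] (p : K[X]) {a : K} (ha : a ≠ 0) :
    p.reverse.rootMultiplicity a = p.rootMultiplicity a⁻¹ := by
  rcases eq_or_ne p 0 with rfl | hp
  · simp
  obtain ⟨q, hpq, hq⟩ := exists_eq_pow_rootMultiplicity_mul_and_not_dvd p hp a⁻¹
  have hqa : ¬ (C ((-a⁻¹) ^ p.rootMultiplicity a⁻¹) * q.reverse).IsRoot a := by
    let _ : Invertible a⁻¹ := invertibleOfNonzero (inv_ne_zero ha)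
    have := (eval₂_reverse_eq_zero_iff (RingHom.id K) a⁻¹ q).not.mpr (mt dvd_iff_isRoot.mpr hq)
    rw [invOf_eq_inv, inv_inv, eval₂_id] at this
    simpa [IsRoot, ha] using this
  have hX : (X - C a⁻¹).reverse = C (-a⁻¹) * (X - C a) := by
    rw [reverse_X_sub_C, mul_sub, ← C_mul, neg_mul, inv_mul_cancel₀ ha]
    simp only [C_neg, C_1]
    ring
  have hrev : p.reverse = C ((-a⁻¹) ^ p.rootMultiplicity a⁻¹) * q.reverse *
      (X - C a) ^ p.rootMultiplicity a⁻¹ := by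
    rw [hpq, reverse_mul_of_domain, reverse_pow, hX, mul_pow, ← C_pow, mul_right_comm, ← hpq]
  rw [hrev, rootMultiplicity_mul_X_sub_C_pow (fun h => hqa (by rw [h]; simp)),
    rootMultiplicity_eq_zero hqa, zero_add]

theorem rootMultiplicity_inv_eq_of_reverse_eq_C_mul {K : Type*} [Field K] {p : K[X]} {c : K}
    (h : p.reverse = C c * p) {a : K} (ha : a ≠ 0) :
    p.rootMultiplicity a⁻¹ = p.rootMultiplicity a := by
  rcases eq_or_ne p 0 with rfl | hp
  · simp
  have hcp : C c * p ≠ 0 := h ▸ mt reverse_eq_zero.mp hp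
  rw [← rootMultiplicity_reverse p ha, h, rootMultiplicity_mul hcp, rootMultiplicity_C, zero_add]

theorem exists_eq_X_sub_one_pow_mul_X_add_one_pow_mul {R : Type*} [CommRing R] {p : R[X]}
    (hp : p ≠ 0) :
    ∃ (l m : ℕ) (q : R[X]), p = (X - 1) ^ l * (X + 1) ^ m * q ∧
      ¬ q.IsRoot 1 ∧ ¬ q.IsRoot (-1) := by
  obtain ⟨p₁, hp₁, hn₁⟩ := exists_eq_pow_rootMultiplicity_mul_and_not_dvd p hp 1
  have hp₁0 : p₁ ≠ 0 := by rintro rfl; exact hn₁ (dvd_zero _)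
  obtain ⟨q, hq, hn₂⟩ := exists_eq_pow_rootMultiplicity_mul_and_not_dvd p₁ hp₁0 (-1)
  refine ⟨_, _, q, by rw [hp₁, hq, map_one, map_neg, map_one, sub_neg_eq_add, mul_assoc], ?_, ?_⟩
  · intro hq1
    refine hn₁ (dvd_iff_isRoot.mpr ?_)
    rw [hq, IsRoot, eval_mul, hq1.eq_zero, mul_zero]
  · exact fun h => hn₂ (dvd_iff_isRoot.mpr h)

end Polynomial

namespace Matrix

variable {n R : Type*} [Fintype n] [DecidableEq n] [CommRing R]

theorem charpolyRev_eq_of_transpose_mul_mul_self {A G : Matrix n n R} (hG : IsUnit G)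
    (h : Aᵀ * G * A = G) :
    A.charpolyRev = C ((-1) ^ Fintype.card n * A.det) * A.charpoly := by
  have hleft : G⁻¹ * Aᵀ * G * A = 1 := by
    rw [Matrix.mul_assoc (G⁻¹ * Aᵀ), Matrix.mul_assoc G⁻¹, ← Matrix.mul_assoc Aᵀ, h,
      nonsing_inv_mul G ((isUnit_iff_isUnit_det G).mp hG)]
  have hdet : IsUnit A.det := isUnit_det_of_left_inverse hleft
  have hconj : A⁻¹.charpoly = A.charpoly := by
    rw [inv_eq_left_inv hleft, ← charpoly_transpose A, ← charpoly_units_conj' hG.unit Aᵀ,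
      IsUnit.unit_spec]
  rw [← hconj, charpoly_inv A ((isUnit_iff_isUnit_det A).mpr hdet)]
  calc A.charpolyRev
      = ((-1) ^ Fintype.card n * (-1) ^ Fintype.card n) * C (A.det * Ring.inverse A.det) *
          A.charpolyRev := by
        rw [Ring.mul_inverse_cancel _ hdet, ← mul_pow, neg_one_mul, neg_neg, one_pow, map_one,
          one_mul, one_mul]
    _ = _ := by
        simp only [map_mul, map_pow, map_neg, map_one]
        ring

end Matrix

open Matrix in
theorem LinearMap.reverse_charpoly_of_isometry {K V : Type*} [Field K] [AddCommGroup V]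
    [Module K V] [FiniteDimensional K V] {B : LinearMap.BilinForm K V} (hB : B.Nondegenerate)
    {T : V →ₗ[K] V} (hT : ∀ v w, B (T v) (T w) = B v w) :
    (charpoly T).reverse = C ((-1) ^ Module.finrank K V * LinearMap.det T) * charpoly T := by
  let b := Module.finBasis K V
  have hG : IsUnit (BilinForm.toMatrix b B) := by
    rw [Matrix.isUnit_iff_isUnit_det, isUnit_iff_ne_zero]
    exact (BilinForm.nondegenerate_iff_det_ne_zero b).mp hB
  have hTGT : (toMatrix b b T)ᵀ * BilinForm.toMatrix b B * toMatrix b b T =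
      BilinForm.toMatrix b B := by
    rw [← BilinForm.toMatrix_comp]
    congr 1
    ext v w
    exact hT v w
  rw [← charpoly_toMatrix T b, Matrix.reverse_charpoly,
    Matrix.charpolyRev_eq_of_transpose_mul_mul_self hG hTGT, det_toMatrix, Fintype.card_fin]

theorem stmt16_general {F V : Type*} [Field F]
    [AddCommGroup V] [Module F V] [FiniteDimensional F V]
    (B : LinearMap.BilinForm F V) (hB : B.Nondegenerate)
    (T : V →ₗ[F] V) (hT : ∀ v w, B (T v) (T w) = B v w) :
    ∃ (l m : ℕ) (q : F[X]),
      LinearMap.charpoly T = (X - 1) ^ l * (X + 1) ^ m * q ∧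
      q ≠ 0 ∧ q.eval 1 ≠ 0 ∧ q.eval (-1) ≠ 0 ∧ q.eval 0 ≠ 0 ∧
      ∀ lam : F, lam ≠ 0 → q.rootMultiplicity lam = q.rootMultiplicity lam⁻¹ := by
  have hmonic := LinearMap.charpoly_monic T
  have hrev := LinearMap.reverse_charpoly_of_isometry hB hT
  have hχ0 : (LinearMap.charpoly T).eval 0 ≠ 0 := by
    have h := congrArg (eval 0) hrev
    rw [← coeff_zero_eq_eval_zero, coeff_zero_reverse, hmonic.leadingCoeff, eval_mul,
      eval_C] at h
    exact right_ne_zero_of_mul_eq_one h.symm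
  obtain ⟨l, m, q, hχ, hq1, hqm1⟩ := exists_eq_X_sub_one_pow_mul_X_add_one_pow_mul hmonic.ne_zero
  have hrm : ∀ μ : F, μ ≠ 1 → μ ≠ -1 →
      q.rootMultiplicity μ = (LinearMap.charpoly T).rootMultiplicity μ := by
    intro μ h1 h2
    rw [hχ, rootMultiplicity_mul_of_not_isRoot]
    simp [sub_eq_zero, add_eq_zero_iff_eq_neg, h1, h2]
  refine ⟨l, m, q, hχ, ?_, hq1, hqm1, ?_, fun lam hlam => ?_⟩
  · rintro rfl
    exact hmonic.ne_zero (by rw [hχ, mul_zero])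
  · intro hq0
    exact hχ0 (by rw [hχ, eval_mul, hq0, mul_zero])
  · by_cases h1 : lam = 1
    · rw [h1, inv_one]
    by_cases h2 : lam = -1
    · rw [h2, inv_neg_one]
    have h2' : lam⁻¹ ≠ -1 := by rwa [Ne, inv_eq_iff_eq_inv, inv_neg_one]
    rw [hrm lam h1 h2, hrm lam⁻¹ (by simpa using h1) h2',
      rootMultiplicity_inv_eq_of_reverse_eq_C_mul hrev hlam]

/-- The characteristic polynomial of an isometry `T` of a non-degenerate symmetric or
alternating bilinear form over an algebraically closed field of characteristic 0 factors as
`(x-1)^l (x+1)^m q(x)` where `q(±1) ≠ 0` and `q` is self-dual: each root `λ` of `q` is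
non-zero and `λ⁻¹` is a root of `q` with the same multiplicity. -/
theorem stmt16 {F V : Type*} [Field F] [IsAlgClosed F] [CharZero F]
    [AddCommGroup V] [Module F V] [FiniteDimensional F V]
    (B : LinearMap.BilinForm F V) (hB : B.Nondegenerate) (hBsa : B.IsSymm ∨ B.IsAlt)
    (T : V →ₗ[F] V) (hT : ∀ v w, B (T v) (T w) = B v w) :
    ∃ (l m : ℕ) (q : F[X]),
      LinearMap.charpoly T = (X - 1) ^ l * (X + 1) ^ m * q ∧
      q ≠ 0 ∧ q.eval 1 ≠ 0 ∧ q.eval (-1) ≠ 0 ∧ q.eval 0 ≠ 0 ∧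
      ∀ lam : F, lam ≠ 0 → q.rootMultiplicity lam = q.rootMultiplicity lam⁻¹ :=
  stmt16_general B hB T hT
end

section
/- Let B be a non-degenerate bilinear form on a finite-dimensional space V over an algebraically closed field of characteristic 0, and let T be an isometry whose only eigenvalues are λ and λ^{-1} with λ ≠ ±1, so that V = V_λ ⊕ V_{λ^{-1}} with B vanishing on each summand. Then the map sending w ∈ V_{λ^{-1}} to the linear functional v ↦ B(v, w) is a linear isomorphism from V_{λ^{-1}} onto the dual space of V_λ, and under this identification T acts on V_{λ^{-1}} as the inverse-dual of its action on V_λ. -/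
/-!
Since `V_λ` and `V_{λ⁻¹}` are isotropic and span `V`, a vector of one of them that pairs trivially
with the other pairs trivially with all of `V`, so by non-degeneracy both pairings
`V_{λ⁻¹} → V_λ^*` and `V_λ → V_{λ⁻¹}^*` are injective. Two injections in opposite directions force
`dim V_λ = dim V_{λ⁻¹}`, so both are isomorphisms. Compatibility with `T` is the isometry identity
`B(T u, T w) = B(u, w)` at `u = T⁻¹ v`.
-/

namespace LinearMap

variable {R M N : Type*} [CommRing R] [AddCommGroup M] [Module R M] [AddCommGroup N] [Module R N]

theorem injective_domRestrict_compl₂_of_sup_eq_top {B : M →ₗ[R] N →ₗ[R] R}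
    (hB : B.SeparatingLeft) {U : Submodule R M} {W W' : Submodule R N} (hsup : W ⊔ W' = ⊤)
    (horth : ∀ u ∈ U, ∀ w ∈ W', B u w = 0) :
    Function.Injective ((B.domRestrict U).compl₂ W.subtype) := by
  rw [injective_iff_map_eq_zero]
  intro u hu
  have horth_W : ∀ w ∈ W, B u w = 0 := fun w hw => LinearMap.congr_fun hu ⟨w, hw⟩
  refine Subtype.ext (hB u fun x => ?_)
  obtain ⟨w, hw, w', hw', rfl⟩ := Submodule.mem_sup.mp (hsup ▸ Submodule.mem_top : x ∈ W ⊔ W')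
  rw [map_add, horth_W w hw, horth u u.2 w' hw', add_zero]

end LinearMap

theorem LinearMap.bijective_of_injective_of_injective_dual {K U W : Type*} [Field K]
    [AddCommGroup U] [Module K U] [FiniteDimensional K U]
    [AddCommGroup W] [Module K W] [FiniteDimensional K W]
    {f : U →ₗ[K] Module.Dual K W} {g : W →ₗ[K] Module.Dual K U}
    (hf : Function.Injective f) (hg : Function.Injective g) :
    Function.Bijective f := by
  have hfin := LinearMap.finrank_le_finrank_of_injective hf
  have hgin := LinearMap.finrank_le_finrank_of_injective hg
  rw [Subspace.dual_finrank_eq] at hfin hgin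
  have hdim : Module.finrank K U = Module.finrank K (Module.Dual K W) := by
    rw [Subspace.dual_finrank_eq]
    exact le_antisymm hfin hgin
  exact ⟨hf, (LinearMap.injective_iff_surjective_of_finrank_eq_finrank hdim).mp hf⟩

theorem stmt19_general {F V : Type*} [Field F]
    [AddCommGroup V] [Module F V] [FiniteDimensional F V]
    (B : LinearMap.BilinForm F V) (hB : B.Nondegenerate)
    (T : V ≃ₗ[F] V) (hT : ∀ v w, B (T v) (T w) = B v w)
    (Vlam Vinv : Submodule F V)
    (hspan : Vlam ⊔ Vinv = ⊤)
    (hz1 : ∀ v ∈ Vlam, ∀ w ∈ Vlam, B v w = 0)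
    (hz2 : ∀ v ∈ Vinv, ∀ w ∈ Vinv, B v w = 0) :
    Function.Bijective
      (((B.flip.domRestrict Vinv).compl₂ Vlam.subtype : Vinv →ₗ[F] Module.Dual F Vlam)) ∧
    (∀ v ∈ Vlam, ∀ w ∈ Vinv, B v (T w) = B (T.symm v) w) := by
  have hinv : Function.Injective ((B.flip.domRestrict Vinv).compl₂ Vlam.subtype) :=
    LinearMap.injective_domRestrict_compl₂_of_sup_eq_top (LinearMap.flip_separatingLeft.mpr hB.2)
      hspan fun u hu w hw => hz2 w hw u hu
  have hlam : Function.Injective ((B.domRestrict Vlam).compl₂ Vinv.subtype) :=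
    LinearMap.injective_domRestrict_compl₂_of_sup_eq_top hB.1 (sup_comm Vlam Vinv ▸ hspan) hz1
  refine ⟨LinearMap.bijective_of_injective_of_injective_dual hinv hlam, fun v _ w _ => ?_⟩
  simpa using hT (T.symm v) w

/-- Let `B` be a non-degenerate symmetric or alternating bilinear form on `V` over an
algebraically closed field of characteristic 0 and `T` an isometry whose only eigenvalues
are `λ` and `λ⁻¹` with `λ ≠ ±1`, so that `V = V_λ ⊕ V_{λ⁻¹}` with `B` vanishing on each
summand.  Then `w ↦ B(·, w)` is a linear isomorphism from `V_{λ⁻¹}` onto the dual of `V_λ`,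
and under this identification `T` acts on `V_{λ⁻¹}` as the inverse-dual of its action on
`V_λ`, i.e. `B(v, T w) = B(T⁻¹ v, w)` for `v ∈ V_λ`, `w ∈ V_{λ⁻¹}`. -/
theorem stmt19 {F V : Type*} [Field F] [IsAlgClosed F] [CharZero F]
    [AddCommGroup V] [Module F V] [FiniteDimensional F V]
    (B : LinearMap.BilinForm F V) (hB : B.Nondegenerate) (hBsa : B.IsSymm ∨ B.IsAlt)
    (T : V ≃ₗ[F] V) (hT : ∀ v w, B (T v) (T w) = B v w)
    (lam : F) (h1 : lam ≠ 1) (h2 : lam ≠ -1)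
    (Vlam Vinv : Submodule F V)
    (hVlam : Vlam = Module.End.maxGenEigenspace T.toLinearMap lam)
    (hVinv : Vinv = Module.End.maxGenEigenspace T.toLinearMap lam⁻¹)
    (hspan : Vlam ⊔ Vinv = ⊤)
    (hz1 : ∀ v ∈ Vlam, ∀ w ∈ Vlam, B v w = 0)
    (hz2 : ∀ v ∈ Vinv, ∀ w ∈ Vinv, B v w = 0) :
    Function.Bijective
      (((B.flip.domRestrict Vinv).compl₂ Vlam.subtype : Vinv →ₗ[F] Module.Dual F Vlam)) ∧
    (∀ v ∈ Vlam, ∀ w ∈ Vinv, B v (T w) = B (T.symm v) w) :=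
  stmt19_general B hB T hT Vlam Vinv hspan hz1 hz2
end
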